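/- arXiv:math/0111300 — 3 statements merged into one kernel-verified Lean document; each statement's English description precedes it below -/
import Mathlib

section
/- Let f₂(x,y) ∈ ℂ[x,y] be a polynomial such that for every b ∈ ℂ and every ε ∈ ℂ with ε ≠ 0, the equation f₂(ε, y) = b has exactly one solution y ∈ ℂ. Then f₂ has the form f₂(x,y) = a x^k y + x^l g(x) for some a ∈ ℂ \ {0}, integers k, l ≥ 0, and g(x) ∈ ℂ[x]. -/
section StmtTwoAux
open Polynomial


open Polynomial

/-- A nonzero polynomial with as many roots (with multiplicity) as its degree,
all equal to `y`. -/
lemma eq_pow_of_roots (p : Polynomial ℂ) (hp : p ≠ 0) (y : ℂ)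
    (h : ∀ z : ℂ, p.IsRoot z → z = y) :
    p = C p.leadingCoeff * (X - C y) ^ p.natDegree := by
  have hs : p.roots.card = p.natDegree :=
    (splits_iff_card_roots).mp (IsAlgClosed.splits p)
  have hrep : p.roots = Multiset.replicate p.natDegree y := by
    rw [Multiset.eq_replicate]
    refine ⟨hs, fun z hz => h z ?_⟩
    exact (mem_roots hp).mp hz
  have := C_leadingCoeff_mul_prod_multiset_X_sub_C (p := p) hs
  rw [hrep, Multiset.map_replicate, Multiset.prod_replicate] at this
  exact this.symm

/-- A bijective (unique-solution) polynomial map on ℂ is affine of degree 1. -/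
lemma affine_of_unique (r : Polynomial ℂ) (h : ∀ b : ℂ, ∃! y : ℂ, r.eval y = b) :
    r.coeff 1 ≠ 0 ∧ ∀ i, 2 ≤ i → r.coeff i = 0 := by
  have hd1 : 1 ≤ r.natDegree := by
    by_contra hd
    push_neg at hd
    interval_cases hdeg : r.natDegree
    · have hr : r = C (r.coeff 0) := r.eq_C_of_natDegree_eq_zero hdeg
      obtain ⟨y, hy, -⟩ := h (r.coeff 0 + 1)
      rw [hr, eval_C] at hy
      simpa using hy
  have hr0 : r ≠ 0 := fun h0 => by simp [h0] at hd1
  have hc : r.leadingCoeff ≠ 0 := leadingCoeff_ne_zero.mpr hr0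
  set d := r.natDegree with hdd
  have key : ∀ b : ℂ, ∃ y : ℂ, r.eval y = b ∧
      r - C b = C r.leadingCoeff * (X - C y) ^ d := by
    intro b
    obtain ⟨y, hy, huy⟩ := h b
    refine ⟨y, hy, ?_⟩
    have hne : r - C b ≠ 0 := by
      intro h0
      have hrb : r = C b := sub_eq_zero.mp h0
      have : r.natDegree = 0 := by rw [hrb]; exact natDegree_C b
      omega
    have hdeg : (r - C b).natDegree = d := natDegree_sub_C
    have hlc : (r - C b).leadingCoeff = r.leadingCoeff := by
      rw [leadingCoeff, hdeg, coeff_sub, coeff_C, if_neg (by omega), sub_zero]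
      rfl
    have := eq_pow_of_roots (r - C b) hne y (fun z hz => by
      apply huy
      have : r.eval z - b = 0 := by simpa using hz
      exact sub_eq_zero.mp this)
    rw [hdeg, hlc] at this
    exact this
  have hd : d = 1 := by
    by_contra hne1
    have hd2 : 2 ≤ d := by omega
    obtain ⟨y0, he0, h0⟩ := key 0
    obtain ⟨y1, he1, h1⟩ := key 1
    have hyy : y0 = y1 := by
      have hder : derivative (C r.leadingCoeff * (X - C y0) ^ d)
          = derivative (C r.leadingCoeff * (X - C y1) ^ d) := by
        have : C r.leadingCoeff * (X - C y0) ^ d + C (0:ℂ)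
            = C r.leadingCoeff * (X - C y1) ^ d + C 1 := by
          rw [← h0, ← h1]; ring
        have h01 : C r.leadingCoeff * (X - C y0) ^ d
            = C r.leadingCoeff * (X - C y1) ^ d + C 1 := by simpa using this
        rw [h01]; simp
      simp only [derivative_mul, derivative_C, derivative_pow, derivative_sub,
        derivative_X, sub_zero, mul_one, zero_mul, zero_add] at hder
      have := congrArg (Polynomial.eval y0) hder
      simp only [eval_mul, eval_C, eval_pow, eval_sub, eval_X, eval_natCast, sub_self] at this
      rw [zero_pow (by omega : d - 1 ≠ 0)] at this
      have hz : (y0 - y1) ^ (d - 1) = 0 := by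
        simpa [mul_eq_zero, hc,
          (show (d:ℂ) ≠ 0 from Nat.cast_ne_zero.mpr (by omega))] using this.symm
      exact sub_eq_zero.mp (pow_eq_zero_iff (by omega : d - 1 ≠ 0) |>.mp hz)
    have : r - C (0:ℂ) = r - C 1 := by rw [h0, h1, hyy]
    have h2 := congrArg (Polynomial.eval 0) this
    simp at h2
    exact one_ne_zero (by linear_combination h2)
  constructor
  · have : r.coeff 1 = r.leadingCoeff := by rw [leadingCoeff, ← hd]
    rw [this]; exact hc
  · intro i hi
    exact coeff_eq_zero_of_natDegree_lt (by omega)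

lemma monomial_of_roots_zero (p : Polynomial ℂ) (hp : p ≠ 0)
    (h : ∀ z : ℂ, p.IsRoot z → z = 0) :
    p = C p.leadingCoeff * X ^ p.natDegree := by
  simpa using eq_pow_of_roots p hp 0 h

lemma bridge (p : MvPolynomial (Fin 2) ℂ) (x y : ℂ) :
    MvPolynomial.eval ![x, y] p =
      ((MvPolynomial.aeval ![Polynomial.C Polynomial.X, Polynomial.X] p :
        Polynomial (Polynomial ℂ)).map (Polynomial.evalRingHom x)).eval y := by
  induction p using MvPolynomial.induction_on with
  | C a => simp
  | add p q hp hq => simp [hp, hq]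
  | mul_X p i hp => fin_cases i <;> simp [hp]

theorem stmt_2_aux (f₂ : MvPolynomial (Fin 2) ℂ)
    (huniq : ∀ b ε : ℂ, ε ≠ 0 → ∃! y : ℂ, MvPolynomial.eval ![ε, y] f₂ = b) :
    ∃ (a : ℂ) (k l : ℕ) (g : Polynomial ℂ), a ≠ 0 ∧
      ∀ x y : ℂ, MvPolynomial.eval ![x, y] f₂ = a * x ^ k * y + x ^ l * g.eval x := by
  set Q : Polynomial (Polynomial ℂ) :=
    MvPolynomial.aeval ![Polynomial.C Polynomial.X, Polynomial.X] f₂ with hQ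
  have hr : ∀ ε : ℂ, ε ≠ 0 → (Q.map (Polynomial.evalRingHom ε)).coeff 1 ≠ 0 ∧
      ∀ i, 2 ≤ i → (Q.map (Polynomial.evalRingHom ε)).coeff i = 0 := by
    intro ε hε
    apply affine_of_unique
    intro b
    have := huniq b ε hε
    simpa only [bridge f₂ ε] using this
  have hcm : ∀ (ε : ℂ) (i : ℕ),
      (Q.map (Polynomial.evalRingHom ε)).coeff i = (Q.coeff i).eval ε := by
    intro ε i; rw [Polynomial.coeff_map]; rfl
  have hhigh : ∀ i, 2 ≤ i → Q.coeff i = 0 := by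
    intro i hi
    apply Polynomial.eq_zero_of_infinite_isRoot
    apply Set.Infinite.mono (s := {(0:ℂ)}ᶜ)
    · intro z hz
      have := (hr z hz).2 i hi
      rw [hcm] at this
      exact this
    · exact Set.Finite.infinite_compl (Set.finite_singleton 0)
  have h1 : ∀ ε : ℂ, ε ≠ 0 → (Q.coeff 1).eval ε ≠ 0 := by
    intro ε hε
    have := (hr ε hε).1
    rwa [hcm] at this
  have hp1 : Q.coeff 1 ≠ 0 := by
    intro h0
    exact h1 1 one_ne_zero (by simp [h0])
  have hroots : ∀ z : ℂ, (Q.coeff 1).IsRoot z → z = 0 := by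
    intro z hz
    by_contra hzz
    exact h1 z hzz hz
  have hmono := monomial_of_roots_zero (Q.coeff 1) hp1 hroots
  refine ⟨(Q.coeff 1).leadingCoeff, (Q.coeff 1).natDegree, 0, Q.coeff 0,
    leadingCoeff_ne_zero.mpr hp1, ?_⟩
  intro x y
  have hQeq : Q = Polynomial.C (Q.coeff 0) + Polynomial.C (Q.coeff 1) * Polynomial.X := by
    ext n
    match n with
    | 0 => simp
    | 1 => simp
    | (n+2) => simp [hhigh (n+2) (by omega), Polynomial.coeff_X,
        Polynomial.coeff_C]
  rw [bridge, ← hQ, hQeq]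
  have := congrArg (fun p => Polynomial.eval x p) hmono
  simp only [eval_mul, eval_C, eval_pow, eval_X] at this
  simp [this]
  ring

end StmtTwoAux


open MvPolynomial Finset

/-- A polynomial map of `ℂ²`: both components are given by polynomials in two variables. -/
def IsPolyMap (f : ℂ × ℂ → ℂ × ℂ) : Prop :=
  ∃ p q : MvPolynomial (Fin 2) ℂ, ∀ z : ℂ × ℂ,
    f z = (MvPolynomial.eval ![z.1, z.2] p, MvPolynomial.eval ![z.1, z.2] q)

/-- A polynomial automorphism of `ℂ²`: a polynomial map with a polynomial inverse. -/
def IsPolyAuto (f : ℂ × ℂ → ℂ × ℂ) : Prop :=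
  IsPolyMap f ∧ ∃ g : ℂ × ℂ → ℂ × ℂ, IsPolyMap g ∧
    Function.LeftInverse g f ∧ Function.RightInverse g f

/-- Two polynomial maps are equivalent if `α ∘ f ∘ β = g` for polynomial automorphisms. -/
def PolyEquivalent (f g : ℂ × ℂ → ℂ × ℂ) : Prop :=
  ∃ α β : ℂ × ℂ → ℂ × ℂ, IsPolyAuto α ∧ IsPolyAuto β ∧ α ∘ f ∘ β = g

/-- A subset of `ℂ²` is isomorphic to the affine line `ℂ`: it is the image of a
polynomial embedding of `ℂ` admitting a polynomial retraction. -/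
def IsoToLine (E : Set (ℂ × ℂ)) : Prop :=
  ∃ φ : ℂ → ℂ × ℂ,
    (∃ p q : Polynomial ℂ, ∀ t : ℂ, φ t = (p.eval t, q.eval t)) ∧
    Function.Injective φ ∧ Set.range φ = E ∧
    ∃ ψ : ℂ × ℂ → ℂ,
      (∃ r : MvPolynomial (Fin 2) ℂ, ∀ z : ℂ × ℂ, ψ z = MvPolynomial.eval ![z.1, z.2] r) ∧
      ∀ t : ℂ, ψ (φ t) = t

/-- If for every `b` and every `ε ≠ 0` the equation `f₂(ε,y) = b` has a
unique solution `y`, then `f₂(x,y) = a x^k y + x^l g(x)`. -/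
theorem stmt_2 (f₂ : MvPolynomial (Fin 2) ℂ)
    (huniq : ∀ b ε : ℂ, ε ≠ 0 → ∃! y : ℂ, MvPolynomial.eval ![ε, y] f₂ = b) :
    ∃ (a : ℂ) (k l : ℕ) (g : Polynomial ℂ), a ≠ 0 ∧
      ∀ x y : ℂ, MvPolynomial.eval ![x, y] f₂ = a * x ^ k * y + x ^ l * g.eval x :=
  stmt_2_aux f₂ huniq
end

section
/- Let h(x,y) = φ(r(x,y)) where r ∈ ℂ[x,y] is a primitive polynomial (generic fiber connected) and φ ∈ ℂ[t] is monic. If for a generic c ∈ ℂ the fiber h⁻¹(c) has exactly d connected components, then deg φ = d, and each connected component of h⁻¹(c) is a fiber r⁻¹(c_i) for some root c_i of φ(t) = c. -/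
open MvPolynomial Finset

private lemma aux_comp
    (R H : ℂ × ℂ → ℂ) (hRcont : Continuous R)
    (φ : Polynomial ℂ) (hH : H = fun z => φ.eval (R z))
    (c' : ℂ) (hne : φ - Polynomial.C c' ≠ 0)
    (hconn : ∀ t : ℂ, φ.eval t = c' → IsConnected (R ⁻¹' {t})) :
    (∀ z ∈ H ⁻¹' {c'}, connectedComponentIn (H ⁻¹' {c'}) z = R ⁻¹' {R z}) ∧
    Set.ncard {s : Set (ℂ × ℂ) | ∃ z ∈ H ⁻¹' {c'}, s = connectedComponentIn (H ⁻¹' {c'}) z}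
      = (φ - Polynomial.C c').roots.toFinset.card := by
  set p : Polynomial ℂ := φ - Polynomial.C c' with hp
  set T : Finset ℂ := p.roots.toFinset with hT
  set F : Set (ℂ × ℂ) := H ⁻¹' {c'} with hF
  have hmemT : ∀ t : ℂ, t ∈ T ↔ φ.eval t = c' := by
    intro t
    rw [hT, Multiset.mem_toFinset, Polynomial.mem_roots hne]
    simp only [Polynomial.IsRoot, hp, Polynomial.eval_sub, Polynomial.eval_C, sub_eq_zero]
  have hmemF : ∀ z : ℂ × ℂ, z ∈ F ↔ φ.eval (R z) = c' := by
    intro z; simp [hF, hH]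
  -- fibers over T are contained in F
  have hKsubF : ∀ t : ℂ, t ∈ T → R ⁻¹' {t} ⊆ F := by
    intro t ht w hw
    have : R w = t := hw
    rw [hmemF, this]
    exact (hmemT t).1 ht
  have hKclosed : ∀ t : ℂ, IsClosed (R ⁻¹' {t}) :=
    fun t => isClosed_singleton.preimage hRcont
  -- main component description
  have hmain : ∀ z ∈ F, connectedComponentIn F z = R ⁻¹' {R z} := by
    intro z hz
    have ht₀ : R z ∈ T := (hmemT _).2 ((hmemF z).1 hz)
    have hzK : z ∈ R ⁻¹' {R z} := rfl
    have hK₀F : R ⁻¹' {R z} ⊆ F := hKsubF _ ht₀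
    have hsub1 : R ⁻¹' {R z} ⊆ connectedComponentIn F z :=
      (hconn _ ((hmemT _).1 ht₀)).isPreconnected.subset_connectedComponentIn hzK hK₀F
    -- the other fibers
    set K₁ : Set (ℂ × ℂ) := ⋃ t ∈ T.erase (R z), R ⁻¹' {t} with hK₁
    have hK₁closed : IsClosed K₁ := by
      apply Set.Finite.isClosed_biUnion (T.erase (R z)).finite_toSet
      exact fun t _ => hKclosed t
    have hFsub : F ⊆ R ⁻¹' {R z} ∪ K₁ := by
      intro w hw
      have hwT : R w ∈ T := (hmemT _).2 ((hmemF w).1 hw)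
      by_cases h : R w = R z
      · exact Or.inl h
      · exact Or.inr (Set.mem_biUnion (Finset.mem_erase.2 ⟨h, hwT⟩) rfl)
    have hdisj : Disjoint (R ⁻¹' {R z}) K₁ := by
      rw [Set.disjoint_left]
      intro w hw hw1
      obtain ⟨t, ht, hwt⟩ := Set.mem_iUnion₂.1 hw1
      have h1 : R w = R z := hw
      have h2 : R w = t := hwt
      exact (Finset.mem_erase.1 ht).1 (h2.symm.trans h1)
    obtain ⟨U, V, hU, hV, hsU, hsV, hUV⟩ :=
      normal_separation (hKclosed (R z)) hK₁closed hdisj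
    have hCsub : connectedComponentIn F z ⊆ U := by
      apply IsPreconnected.subset_left_of_subset_union hU hV hUV
      · exact fun w hw => (hFsub (connectedComponentIn_subset F z hw)).imp (@hsU w) (@hsV w)
      · exact ⟨z, mem_connectedComponentIn hz, hsU hzK⟩
      · exact isPreconnected_connectedComponentIn
    refine subset_antisymm (fun w hw => ?_) hsub1
    rcases hFsub (connectedComponentIn_subset F z hw) with h | h
    · exact h
    · exact absurd (hsV h) (Set.disjoint_left.1 hUV (hCsub hw))
  constructor
  · exact hmain
  · have himg : {s : Set (ℂ × ℂ) | ∃ z ∈ F, s = connectedComponentIn F z}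
        = (fun t => R ⁻¹' {t}) '' ↑T := by
      ext s
      constructor
      · rintro ⟨z, hz, rfl⟩
        exact ⟨R z, (hmemT _).2 ((hmemF z).1 hz), (hmain z hz).symm⟩
      · rintro ⟨t, ht, rfl⟩
        obtain ⟨z, hz⟩ := (hconn t ((hmemT t).1 ht)).nonempty
        have hzF : z ∈ F := hKsubF t ht hz
        have hRz : R z = t := hz
        exact ⟨z, hzF, by rw [hmain z hzF, hRz]⟩
    rw [himg, Set.ncard_image_of_injOn, Set.ncard_coe_finset]
    intro t₁ ht₁ t₂ ht₂ h
    obtain ⟨z, hz⟩ := (hconn t₁ ((hmemT t₁).1 ht₁)).nonempty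
    have : z ∈ R ⁻¹' {t₂} := by rw [show R ⁻¹' {t₂} = (fun t => R ⁻¹' {t}) t₂ from rfl, ← h]; exact hz
    have h1 : R z = t₁ := hz
    have h2 : R z = t₂ := this
    rw [← h1, h2]

/-- Stein factorization `h = φ ∘ r` with `r` primitive and `φ` monic:
if generic fibers of `h` have exactly `d` connected components then `deg φ = d` and each
component of the fiber `h⁻¹(c)` is a fiber `r⁻¹(c_i)` for a root `c_i` of `φ(t) = c`. -/
theorem stmt_8 (r : MvPolynomial (Fin 2) ℂ) (φ : Polynomial ℂ) (hmonic : φ.Monic)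
    (R : ℂ × ℂ → ℂ) (hR : R = fun z : ℂ × ℂ => MvPolynomial.eval ![z.1, z.2] r)
    (H : ℂ × ℂ → ℂ) (hH : H = fun z : ℂ × ℂ => φ.eval (R z))
    (Sr : Set ℂ) (hSr : Sr.Finite)
    (hprim : ∀ t : ℂ, t ∉ Sr → IsConnected (R ⁻¹' {t}))
    (d : ℕ) (S : Set ℂ) (hS : S.Finite)
    (hcomp : ∀ c' : ℂ, c' ∉ S →
      Set.ncard {s : Set (ℂ × ℂ) | ∃ z ∈ H ⁻¹' {c'}, s = connectedComponentIn (H ⁻¹' {c'}) z} = d)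
    (c : ℂ) (hc : c ∉ S)
    (hroots : ∀ t : ℂ, φ.eval t = c → t ∉ Sr) :
    φ.natDegree = d ∧
    ∀ z ∈ H ⁻¹' {c}, ∃ ci : ℂ, φ.eval ci = c ∧
      connectedComponentIn (H ⁻¹' {c}) z = R ⁻¹' {ci} := by
  have hvec : Continuous (fun z : ℂ × ℂ => ![z.1, z.2]) := by
    apply continuous_pi
    intro i
    fin_cases i
    · simpa using continuous_fst
    · simpa using continuous_snd
  have hRcont : Continuous R := by
    rw [hR]; exact (MvPolynomial.continuous_eval r).comp hvec
  have hdeg : φ.natDegree = d := by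
    by_cases h0 : φ.natDegree = 0
    · have hφ1 : φ = 1 := (Polynomial.Monic.natDegree_eq_zero hmonic).1 h0
      obtain ⟨c', hc'⟩ :=
        (Set.Finite.infinite_compl (hS.union (Set.finite_singleton (1 : ℂ)))).nonempty
      simp only [Set.mem_compl_iff, Set.mem_union, Set.mem_singleton_iff, not_or] at hc'
      have hne : φ - Polynomial.C c' ≠ 0 := by
        intro h
        have h1 : φ.eval 0 - c' = 0 := by
          have := congrArg (Polynomial.eval 0) h
          simpa using this
        rw [hφ1] at h1
        simp only [Polynomial.eval_one] at h1
        exact hc'.2 (sub_eq_zero.mp h1).symm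
      have hconn : ∀ t : ℂ, φ.eval t = c' → IsConnected (R ⁻¹' {t}) := by
        intro t ht
        rw [hφ1, Polynomial.eval_one] at ht
        exact absurd ht.symm hc'.2
      obtain ⟨-, hcard⟩ := aux_comp R H hRcont φ hH c' hne hconn
      have hroots0 : (φ - Polynomial.C c').roots = 0 := by
        rw [hφ1, show (1 : Polynomial ℂ) - Polynomial.C c' = Polynomial.C (1 - c') by
          rw [map_sub, map_one]]
        exact Polynomial.roots_C _
      rw [h0, ← hcomp c' hc'.1, hcard, hroots0]
      simp
    · have hφ' : Polynomial.derivative φ ≠ 0 := fun h =>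
        h0 (Polynomial.natDegree_eq_zero_of_derivative_eq_zero h)
      have hbad : (S ∪ (fun t => φ.eval t) '' Sr ∪
          (fun t => φ.eval t) '' {t | (Polynomial.derivative φ).IsRoot t}).Finite :=
        (hS.union (hSr.image _)).union ((Polynomial.finite_setOf_isRoot hφ').image _)
      obtain ⟨c', hc'⟩ := hbad.infinite_compl.nonempty
      simp only [Set.mem_compl_iff, Set.mem_union, not_or] at hc'
      obtain ⟨⟨hc'S, hc'Sr⟩, hc'crit⟩ := hc'
      have hne : φ - Polynomial.C c' ≠ 0 := fun h =>
        h0 (by rw [← Polynomial.natDegree_sub_C (a := c'), h, Polynomial.natDegree_zero])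
      have hconn : ∀ t : ℂ, φ.eval t = c' → IsConnected (R ⁻¹' {t}) := by
        intro t ht
        apply hprim
        intro htSr
        exact hc'Sr ⟨t, htSr, ht⟩
      obtain ⟨-, hcard⟩ := aux_comp R H hRcont φ hH c' hne hconn
      have hsep : (φ - Polynomial.C c').Separable := by
        rw [Polynomial.separable_def]
        have hder : Polynomial.derivative (φ - Polynomial.C c') = Polynomial.derivative φ := by
          simp
        rw [hder, Polynomial.isCoprime_iff_aeval_ne_zero_of_isAlgClosed ℂ ℂ]
        intro a
        by_cases h : (Polynomial.derivative φ).eval a = 0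
        · left
          rw [show (Polynomial.aeval a) (φ - Polynomial.C c')
              = Polynomial.eval a (φ - Polynomial.C c') by
            rw [← Polynomial.coe_aeval_eq_eval]]
          simp only [Polynomial.eval_sub, Polynomial.eval_C, sub_ne_zero]
          intro heq
          exact hc'crit ⟨a, h, heq⟩
        · right
          rwa [show (Polynomial.aeval a) (Polynomial.derivative φ)
              = Polynomial.eval a (Polynomial.derivative φ) by
            rw [← Polynomial.coe_aeval_eq_eval]]
      have hcount : (φ - Polynomial.C c').roots.toFinset.card = φ.natDegree := by
        rw [Multiset.toFinset_card_of_nodup (Polynomial.nodup_roots hsep),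
          ← Polynomial.natDegree_sub_C (p := φ) (a := c')]
        exact Polynomial.splits_iff_card_roots.mp (IsAlgClosed.splits _)
      rw [← hcomp c' hc'S, hcard, hcount]
  refine ⟨hdeg, ?_⟩
  by_cases hnec : φ - Polynomial.C c = 0
  · exfalso
    have hφc : φ = Polynomial.C c := by rwa [sub_eq_zero] at hnec
    have h0 : φ.natDegree = 0 := by rw [hφc]; exact Polynomial.natDegree_C c
    have hφ1 : φ = 1 := (Polynomial.Monic.natDegree_eq_zero hmonic).1 h0
    have hc1 : c = 1 := by
      have : Polynomial.C c = Polynomial.C (1 : ℂ) := by rw [← hφc, hφ1, map_one]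
      exact Polynomial.C_injective this
    have hFuniv : H ⁻¹' {c} = Set.univ := by
      ext z
      simp [hH, hφ1, hc1]
    have h1 := hcomp c hc
    rw [hFuniv] at h1
    have h2 : {s : Set (ℂ × ℂ) | ∃ z ∈ (Set.univ : Set (ℂ × ℂ)),
        s = connectedComponentIn Set.univ z} = {Set.univ} := by
      ext s
      simp only [Set.mem_univ, true_and, Set.mem_setOf_eq, Set.mem_singleton_iff]
      constructor
      · rintro ⟨z, -, rfl⟩
        rw [connectedComponentIn_univ, PreconnectedSpace.connectedComponent_eq_univ]
      · rintro rfl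
        exact ⟨(0, 0), by
          rw [connectedComponentIn_univ, PreconnectedSpace.connectedComponent_eq_univ]⟩
    rw [h2] at h1
    simp only [Set.ncard_singleton] at h1
    rw [← h1] at hdeg
    exact absurd (hdeg.symm.trans h0) one_ne_zero
  · intro z hz
    have hconn : ∀ t : ℂ, φ.eval t = c → IsConnected (R ⁻¹' {t}) :=
      fun t ht => hprim t (hroots t ht)
    obtain ⟨hmain, -⟩ := aux_comp R H hRcont φ hH c hnec hconn
    refine ⟨R z, ?_, hmain z hz⟩
    have : H z = c := hz
    rw [hH] at this
    exact this
end

section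
/- Let d ≥ 1, m ≥ 0, and f₂(x,y) = a x^m(y + h(x)) + c(x^d) where a ≠ 0, h, c ∈ ℂ[x], and h(x) = Σ_{i + m ≢ 0 mod d} a_i x^i. Then the map (x,y) ↦ (x^d, f₂(x,y)) is equivalent, via the automorphisms γ₁(u,v) = (u, a⁻¹(v − c(u))) and γ₂(x,y) = (x, y − h(x)), to the map (x,y) ↦ (x^d, x^m y). -/
open MvPolynomial Finset

/-- With `f₂(x,y) = a x^m (y + h(x)) + c(x^d)` and the triangular
automorphisms `γ₁(u,v) = (u, a⁻¹(v - c(u)))`, `γ₂(x,y) = (x, y - h(x))`, one has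
`γ₁ ∘ F ∘ γ₂ = ((x,y) ↦ (x^d, x^m y))`. -/
theorem stmt_15 (d m : ℕ) (hd : 1 ≤ d) (a : ℂ) (ha : a ≠ 0)
    (h c : Polynomial ℂ) (hh : ∀ i : ℕ, (i + m) % d = 0 → h.coeff i = 0)
    (F γ₁ γ₂ : ℂ × ℂ → ℂ × ℂ)
    (hF : F = fun z : ℂ × ℂ => (z.1 ^ d, a * z.1 ^ m * (z.2 + h.eval z.1) + c.eval (z.1 ^ d)))
    (hγ₁ : γ₁ = fun w : ℂ × ℂ => (w.1, a⁻¹ * (w.2 - c.eval w.1)))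
    (hγ₂ : γ₂ = fun z : ℂ × ℂ => (z.1, z.2 - h.eval z.1)) :
    IsPolyAuto γ₁ ∧ IsPolyAuto γ₂ ∧
    γ₁ ∘ F ∘ γ₂ = fun z : ℂ × ℂ => (z.1 ^ d, z.1 ^ m * z.2) := by
  have key : ∀ (p : Polynomial ℂ) (x y : ℂ),
      MvPolynomial.eval ![x, y] (Polynomial.aeval (MvPolynomial.X 0 : MvPolynomial (Fin 2) ℂ) p)
        = p.eval x := by
    intro p x y
    induction p using Polynomial.induction_on' with
    | add p q hp hq => simp [hp, hq]
    | monomial n b => simp [Polynomial.aeval_monomial]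
  have triPoly : ∀ (b : ℂ) (p : Polynomial ℂ),
      IsPolyMap (fun w : ℂ × ℂ => (w.1, b * w.2 + p.eval w.1)) := by
    intro b p
    refine ⟨MvPolynomial.X 0,
      MvPolynomial.C b * MvPolynomial.X 1 + Polynomial.aeval (MvPolynomial.X 0) p, ?_⟩
    intro z
    simp [key p z.1 z.2]
  have triAuto : ∀ (b : ℂ) (p : Polynomial ℂ), b ≠ 0 →
      IsPolyAuto (fun w : ℂ × ℂ => (w.1, b * w.2 + p.eval w.1)) := by
    intro b p hb
    refine ⟨triPoly b p, fun w => (w.1, b⁻¹ * w.2 - b⁻¹ * p.eval w.1), ?_, ?_, ?_⟩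
    · have := triPoly b⁻¹ (-(Polynomial.C b⁻¹ * p))
      simpa [mul_comm, sub_eq_add_neg] using this
    · intro w; ext <;> field_simp <;> ring
    · intro w; ext <;> field_simp <;> ring
  have hγ₁' : γ₁ = fun w : ℂ × ℂ => (w.1, a⁻¹ * w.2 + (-(Polynomial.C a⁻¹ * c)).eval w.1) := by
    rw [hγ₁]; funext w; simp; ring
  have hγ₂' : γ₂ = fun w : ℂ × ℂ => (w.1, (1:ℂ) * w.2 + (-h).eval w.1) := by
    rw [hγ₂]; funext w; simp [sub_eq_add_neg]
  refine ⟨?_, ?_, ?_⟩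
  · rw [hγ₁']; exact triAuto _ _ (inv_ne_zero ha)
  · rw [hγ₂']; exact triAuto _ _ one_ne_zero
  · funext z
    simp only [hF, hγ₁, hγ₂, Function.comp_apply]
    refine Prod.ext rfl ?_
    field_simp
    ring
end
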